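/- Let Φ ∈ ℝ^{N×r} have full column rank and S = ΦᵀΦ. If D ∈ ℝ^{N×N} is skew-symmetric, A = Φᵀ D Φ, and a(t) solves da/dt = -c S⁻¹ A a, then the ROM energy E_r(t) = (h/2)(Φ a(t))ᵀ(Φ a(t)) is constant in time. In particular this holds even when the basis Φ is not orthonormal. -/

import Mathlib

open Matrix

/-- Energy conservation of the Galerkin ROM: if `D` is skew-symmetric,
`S = ΦᵀΦ`, `A = ΦᵀDΦ`, and `a` solves `da/dt = -c S⁻¹ A a`, then the ROM
energy `E_r(t) = (h/2)(Φa)ᵀ(Φa)` is constant in time, even for a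
non-orthonormal basis `Φ`. -/
theorem rom_energy_conserved
    (N r : ℕ) (hr : r ≤ N) (h c : ℝ) (hh : 0 < h)
    (Φ : Matrix (Fin N) (Fin r) ℝ) (hΦ : LinearIndependent ℝ Φᵀ)
    (S : Matrix (Fin r) (Fin r) ℝ) (hS : S = Φᵀ * Φ) (hSinv : IsUnit S.det)
    (D : Matrix (Fin N) (Fin N) ℝ) (hD : Dᵀ = -D)
    (A : Matrix (Fin r) (Fin r) ℝ) (hA : A = Φᵀ * D * Φ)
    (a : ℝ → (Fin r → ℝ))
    (ha : ∀ t : ℝ, HasDerivAt a (-c • S⁻¹.mulVec (A.mulVec (a t))) t)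
    (E : ℝ → ℝ)
    (hE : ∀ t, E t = (h/2) * (Φ.mulVec (a t) ⬝ᵥ Φ.mulVec (a t))) :
    ∀ t : ℝ, E t = E 0 := by
  -- A is skew-symmetric
  have hAskew : Aᵀ = -A := by
    rw [hA, Matrix.transpose_mul, Matrix.transpose_mul, Matrix.transpose_transpose, hD]
    rw [Matrix.mul_assoc, Matrix.neg_mul, Matrix.mul_neg]

  -- dot product identity
  have hdot : ∀ x y : Fin r → ℝ,
      Φ.mulVec x ⬝ᵥ Φ.mulVec y = S.mulVec x ⬝ᵥ y := by
    intro x y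
    rw [Matrix.dotProduct_mulVec, ← Matrix.mulVec_transpose, Matrix.mulVec_mulVec, ← hS]
  have hSS : ∀ w : Fin r → ℝ, S.mulVec (S⁻¹.mulVec w) = w := by
    intro w
    rw [Matrix.mulVec_mulVec, Matrix.mul_nonsing_inv S hSinv, Matrix.one_mulVec]
  have hAzero : ∀ u : Fin r → ℝ, A.mulVec u ⬝ᵥ u = 0 := by
    intro u
    have h1 : A.mulVec u ⬝ᵥ u = u ⬝ᵥ A.mulVec u := dotProduct_comm _ _
    have h2 : u ⬝ᵥ A.mulVec u = Aᵀ.mulVec u ⬝ᵥ u := by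
      rw [Matrix.dotProduct_mulVec, ← Matrix.mulVec_transpose]
    rw [hAskew, Matrix.neg_mulVec, neg_dotProduct] at h2
    linarith [h1, h2]
  -- E has derivative 0 everywhere
  have key : ∀ t : ℝ, HasDerivAt E 0 t := by
    intro t
    set v' : Fin r → ℝ := -c • S⁻¹.mulVec (A.mulVec (a t)) with hv'
    have hcomp : ∀ j, HasDerivAt (fun s => a s j) (v' j) t :=
      fun j => hasDerivAt_pi.mp (ha t) j
    have hmv : ∀ i, HasDerivAt (fun s => Φ.mulVec (a s) i) (Φ.mulVec v' i) t := by
      intro i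
      simp only [Matrix.mulVec, dotProduct]
      exact HasDerivAt.fun_sum fun j _ => (hcomp j).const_mul (Φ i j)
    have h1 : HasDerivAt (fun s => Φ.mulVec (a s) ⬝ᵥ Φ.mulVec (a s))
        (Φ.mulVec v' ⬝ᵥ Φ.mulVec (a t) + Φ.mulVec (a t) ⬝ᵥ Φ.mulVec v') t := by
      simp only [dotProduct]
      have := HasDerivAt.fun_sum (fun i (_ : i ∈ Finset.univ) => (hmv i).mul (hmv i))
      rw [← Finset.sum_add_distrib]
      exact this
    have h2 : HasDerivAt (fun s => (h/2) * (Φ.mulVec (a s) ⬝ᵥ Φ.mulVec (a s)))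
        ((h/2) * (Φ.mulVec v' ⬝ᵥ Φ.mulVec (a t) + Φ.mulVec (a t) ⬝ᵥ Φ.mulVec v')) t :=
      h1.const_mul _
    have hzero : (h/2) * (Φ.mulVec v' ⬝ᵥ Φ.mulVec (a t) + Φ.mulVec (a t) ⬝ᵥ Φ.mulVec v') = 0 := by
      have hc : Φ.mulVec (a t) ⬝ᵥ Φ.mulVec v' = Φ.mulVec v' ⬝ᵥ Φ.mulVec (a t) :=
        dotProduct_comm _ _
      have ht1 : Φ.mulVec v' ⬝ᵥ Φ.mulVec (a t) = 0 := by
        rw [hdot, hv', Matrix.mulVec_smul, hSS, smul_dotProduct, hAzero]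
        simp
      rw [hc, ht1]
      ring
    have hEeq : E = fun s => (h/2) * (Φ.mulVec (a s) ⬝ᵥ Φ.mulVec (a s)) := funext hE
    rw [hEeq, ← hzero]
    exact h2
  intro t
  exact is_const_of_deriv_eq_zero (fun s => (key s).differentiableAt)
    (fun s => (key s).deriv) t 0
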